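/- Assume σ_1, …, σ_n > 0 and let φ_1, …, φ_n be nonzero reals with |φ_1| ≥ |φ_2| ≥ … ≥ |φ_n|, assigned so that F v_i = φ_i v_i where F := V diag(φ_1, …, φ_n) Vᵀ. Let p ≤ n, let K ∈ ℝ^{n×p}, let P := Σ_{i=1}^{p} v_i v_iᵀ, and assume rank(PK) = p. Fix i ≤ p and let s_i be the unique vector in the column space of K with P s_i = v_i; set β_i := ‖v_i − s_i‖₂ and α_i := max_{j ≥ p+1} σ_j/σ_i. Let 𝒫_U be the orthogonal projection of ℝ^m onto the column space of A F^ℓ K. Then ‖(I − 𝒫_U) u_i‖₂ ≤ α_i β_i |φ_{p+1}/φ_i|^ℓ. -/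

import Mathlib

/-
Since `A Fˡ = U diag(σ φˡ) Vᵀ`, we have `uᵢ = A Fˡ vᵢ / (σᵢ φᵢˡ)`, while `w = A Fˡ sᵢ / (σᵢ φᵢˡ)`
lies in the column space of `A Fˡ K`. The orthogonal projection is the best approximation from
that space, so `‖(I − 𝒫_U) uᵢ‖₂ ≤ ‖uᵢ − w‖₂ = ‖diag(σ φˡ / (σᵢ φᵢˡ)) Vᵀ (vᵢ − sᵢ)‖₂`.
Because `P (vᵢ − sᵢ) = 0`, the vector `Vᵀ (vᵢ − sᵢ)`, of norm `βᵢ`, vanishes in its first `p`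
coordinates, and on the others the diagonal factor is at most `αᵢ |φ_{p+1}/φᵢ|ˡ`.
-/

open Matrix

noncomputable def enorm₂ {k : ℕ} (x : Fin k → ℝ) : ℝ := Real.sqrt (∑ a, x a ^ 2)

section Norm

variable {k : ℕ}

lemma enorm₂_eq_sqrt_dotProduct (x : Fin k → ℝ) : enorm₂ x = √(x ⬝ᵥ x) := by
  simp only [enorm₂, dotProduct, sq]

lemma enorm₂_le_enorm₂_add_of_dotProduct_eq_zero {x y : Fin k → ℝ} (h : x ⬝ᵥ y = 0) :
    enorm₂ x ≤ enorm₂ (x + y) := by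
  rw [enorm₂_eq_sqrt_dotProduct, enorm₂_eq_sqrt_dotProduct]
  refine Real.sqrt_le_sqrt ?_
  have hy : 0 ≤ y ⬝ᵥ y := dotProduct_self_star_nonneg y
  rw [add_dotProduct, dotProduct_add, dotProduct_add, dotProduct_comm y x, h]
  linarith

lemma enorm₂_mulVec {l : ℕ} {M : Matrix (Fin k) (Fin l) ℝ} (hM : Mᵀ * M = 1) (x : Fin l → ℝ) :
    enorm₂ (M *ᵥ x) = enorm₂ x := by
  rw [enorm₂_eq_sqrt_dotProduct, enorm₂_eq_sqrt_dotProduct, dotProduct_mulVec,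
    ← mulVec_transpose, mulVec_mulVec, hM, one_mulVec]

lemma enorm₂_mul_le {a x : Fin k → ℝ} {C : ℝ} (hC : 0 ≤ C) (ha : ∀ j, x j ≠ 0 → |a j| ≤ C) :
    enorm₂ (a * x) ≤ C * enorm₂ x := by
  have hsq : ∀ j, (a * x) j ^ 2 ≤ C ^ 2 * x j ^ 2 := fun j => by
    by_cases hx : x j = 0
    · simp [hx]
    · rw [Pi.mul_apply, mul_pow, ← sq_abs (a j)]
      gcongr
      exact ha j hx
  calc enorm₂ (a * x) ≤ √(C ^ 2 * ∑ j, x j ^ 2) := by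
        rw [Finset.mul_sum]; exact Real.sqrt_le_sqrt (Finset.sum_le_sum fun j _ => hsq j)
    _ = C * enorm₂ x := by rw [Real.sqrt_mul (sq_nonneg C), Real.sqrt_sq hC, enorm₂]

lemma enorm₂_sub_mulVec_le {Q : Matrix (Fin k) (Fin k) ℝ} (hsymm : Qᵀ = Q) (hidem : Q * Q = Q)
    (u : Fin k → ℝ) {w : Fin k → ℝ} (hw : Q *ᵥ w = w) :
    enorm₂ (u - Q *ᵥ u) ≤ enorm₂ (u - w) := by
  have horth : (u - Q *ᵥ u) ⬝ᵥ Q *ᵥ (u - w) = 0 := by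
    rw [dotProduct_mulVec, ← mulVec_transpose, hsymm, mulVec_sub, mulVec_mulVec, hidem, sub_self,
      zero_dotProduct]
  have hsplit : u - w = (u - Q *ᵥ u) + Q *ᵥ (u - w) := by
    rw [mulVec_sub, hw]; abel
  rw [hsplit]
  exact enorm₂_le_enorm₂_add_of_dotProduct_eq_zero horth

end Norm

section ColumnSpace

variable {R : Type*} [CommSemiring R] {k l q : Type*} [Fintype l] [Fintype q]

lemma mulVec_mem_span_range_transpose_mul (M : Matrix k l R) {K : Matrix l q R} {x : l → R}
    (hx : x ∈ Submodule.span R (Set.range Kᵀ)) :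
    M *ᵥ x ∈ Submodule.span R (Set.range (M * K)ᵀ) := by
  change x ∈ Submodule.span R (Set.range K.col) at hx
  change _ ∈ Submodule.span R (Set.range (M * K).col)
  rw [← range_mulVecLin] at hx ⊢
  obtain ⟨t, rfl⟩ := hx
  exact ⟨t, by simp [mulVec_mulVec]⟩

lemma mulVec_eq_self_of_mem_span_range_transpose [Fintype k] {Q : Matrix k k R}
    (hidem : Q * Q = Q) {x : k → R} (hx : x ∈ Submodule.span R (Set.range Qᵀ)) :
    Q *ᵥ x = x := by
  change x ∈ Submodule.span R (Set.range Q.col) at hx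
  rw [← range_mulVecLin] at hx
  obtain ⟨y, rfl⟩ := hx
  simp [mulVec_mulVec, hidem]

end ColumnSpace

section Spectral

variable {R : Type*} [CommRing R] {k l : Type*} [Fintype l] [DecidableEq l]

lemma mul_diagonal_mul_transpose_mulVec (U : Matrix k l R) (d : l → R) (V : Matrix l l R)
    (x : l → R) : (U * diagonal d * Vᵀ) *ᵥ x = U *ᵥ (d * Vᵀ *ᵥ x) := by
  rw [← mulVec_mulVec, ← mulVec_mulVec]
  congr 1
  ext j
  exact mulVec_diagonal _ _ j

variable {V : Matrix l l R}

lemma mul_diagonal_mul_transpose_mulVec_col (hV : Vᵀ * V = 1) (U : Matrix k l R) (d : l → R)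
    (j : l) : (U * diagonal d * Vᵀ) *ᵥ V.col j = d j • U.col j := by
  rw [← mulVec_single_one, ← mulVec_single_one, mul_diagonal_mul_transpose_mulVec,
    mulVec_mulVec, hV, one_mulVec, ← mulVec_smul]
  congr 1
  ext a
  by_cases h : a = j <;> simp [h]

lemma transpose_mulVec_mul_diagonal_mul_transpose_mulVec (hV : Vᵀ * V = 1) (d : l → R)
    (x : l → R) : Vᵀ *ᵥ ((V * diagonal d * Vᵀ) *ᵥ x) = d * Vᵀ *ᵥ x := by
  rw [mul_diagonal_mul_transpose_mulVec, mulVec_mulVec, hV, one_mulVec]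

lemma mul_diagonal_mul_transpose_mul_mul_diagonal_mul_transpose (hV : Vᵀ * V = 1)
    (U : Matrix k l R) (a b : l → R) :
    U * diagonal a * Vᵀ * (V * diagonal b * Vᵀ) = U * diagonal (a * b) * Vᵀ := by
  simp only [Matrix.mul_assoc]
  rw [← Matrix.mul_assoc Vᵀ, hV, Matrix.one_mul, ← Matrix.mul_assoc (diagonal a),
    diagonal_mul_diagonal]
  rfl

lemma mul_diagonal_mul_transpose_pow (hV : Vᵀ * V = 1) (d : l → R) (t : ℕ) :
    (V * diagonal d * Vᵀ) ^ t = V * diagonal (d ^ t) * Vᵀ := by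
  induction t with
  | zero => simpa using (mul_eq_one_comm.mp hV).symm
  | succ t ih =>
    rw [pow_succ, ih, mul_diagonal_mul_transpose_mul_mul_diagonal_mul_transpose hV, pow_succ]

lemma sum_vecMulVec_col_col (V : Matrix k l R) (S : Finset l) :
    ∑ j ∈ S, vecMulVec (V.col j) (V.col j) =
      V * diagonal (fun j => if j ∈ S then (1 : R) else 0) * Vᵀ := by
  ext a b
  rw [Matrix.sum_apply, mul_apply]
  simp only [mul_diagonal, vecMulVec_apply, col_apply, transpose_apply, mul_ite, ite_mul, mul_one,
    mul_zero, zero_mul]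
  rw [Finset.sum_ite_mem, Finset.univ_inter]

lemma transpose_mulVec_col_sub_apply_eq_zero (hV : Vᵀ * V = 1) {S : Finset l} {i j : l}
    (hi : i ∈ S) (hj : j ∈ S) {s : l → R}
    (hs : (∑ k ∈ S, vecMulVec (V.col k) (V.col k)) *ᵥ s = V.col i) :
    (Vᵀ *ᵥ (V.col i - s)) j = 0 := by
  rw [sum_vecMulVec_col_col] at hs
  set d : l → R := fun k => if k ∈ S then 1 else 0
  have hd : ∀ k ∈ S, d k = 1 := fun k hk => if_pos hk
  have hPx : (V * diagonal d * Vᵀ) *ᵥ (V.col i - s) = 0 := by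
    rw [mulVec_sub, hs, mul_diagonal_mul_transpose_mulVec_col hV, hd i hi, one_smul, sub_self]
  have hdx := congrFun (transpose_mulVec_mul_diagonal_mul_transpose_mulVec hV d (V.col i - s)) j
  rwa [hPx, mulVec_zero, Pi.mul_apply, hd j hj, one_mul, eq_comm] at hdx

end Spectral

lemma abs_inv_mul_mul_pow_le {σi σj φi φj φp α : ℝ} (hσi : 0 < σi) (hσj : 0 ≤ σj)
    (hα : σj / σi ≤ α) (hφ : |φj| ≤ |φp|) (ℓ : ℕ) :
    |(σi * φi ^ ℓ)⁻¹ * (σj * φj ^ ℓ)| ≤ α * |φp / φi| ^ ℓ := by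
  have hα0 : 0 ≤ α := (div_nonneg hσj hσi.le).trans hα
  calc |(σi * φi ^ ℓ)⁻¹ * (σj * φj ^ ℓ)| = σj / σi * |φj / φi| ^ ℓ := by
        rw [abs_mul, abs_inv, abs_mul, abs_mul, abs_of_pos hσi, abs_of_nonneg hσj, abs_div,
          div_pow, abs_pow, abs_pow, mul_inv]
        ring
    _ ≤ α * |φp / φi| ^ ℓ := by
        rw [abs_div, abs_div]
        gcongr

theorem stmt_9_general {m n : ℕ}
    (U : Matrix (Fin m) (Fin n) ℝ) (V : Matrix (Fin n) (Fin n) ℝ) (σ : Fin n → ℝ)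
    (hU : Uᵀ * U = 1) (hV : Vᵀ * V = 1) (hσ : ∀ i, 0 < σ i)
    (A : Matrix (Fin m) (Fin n) ℝ) (hA : A = U * Matrix.diagonal σ * Vᵀ)
    (φ : Fin n → ℝ) (hφ0 : ∀ i, φ i ≠ 0)
    (hφmono : ∀ i j : Fin n, i ≤ j → |φ j| ≤ |φ i|)
    (F : Matrix (Fin n) (Fin n) ℝ) (hF : F = V * Matrix.diagonal φ * Vᵀ)
    (ℓ : ℕ)
    (p : ℕ) (hp : p < n)
    (K : Matrix (Fin n) (Fin p) ℝ)
    (P : Matrix (Fin n) (Fin n) ℝ)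
    (hP : P = ∑ i ∈ Finset.univ.filter fun i : Fin n => (i : ℕ) < p,
      Matrix.vecMulVec (fun a => V a i) (fun a => V a i))
    (i : Fin n) (hi : (i : ℕ) < p)
    (s : Fin n → ℝ)
    (hsmem : s ∈ Submodule.span ℝ (Set.range Kᵀ))
    (hsproj : P.mulVec s = fun a => V a i)
    (β : ℝ) (hβ : β = enorm₂ (fun a => V a i - s a))
    (α : ℝ) (hα : IsGreatest {x : ℝ | ∃ j : Fin n, p ≤ (j : ℕ) ∧ x = σ j / σ i} α)
    (PU : Matrix (Fin m) (Fin m) ℝ)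
    (hPUsym : PUᵀ = PU) (hPUidem : PU * PU = PU)
    (hPUrange : Submodule.span ℝ (Set.range PUᵀ) =
      Submodule.span ℝ (Set.range (A * F ^ ℓ * K)ᵀ)) :
    enorm₂ (fun a => U a i - PU.mulVec (fun b => U b i) a) ≤
      α * β * |φ ⟨p, hp⟩ / φ i| ^ ℓ := by
  set g : Fin n → ℝ := σ * φ ^ ℓ
  have hAF : A * F ^ ℓ = U * diagonal g * Vᵀ := by
    rw [hA, hF, mul_diagonal_mul_transpose_pow hV,
      mul_diagonal_mul_transpose_mul_mul_diagonal_mul_transpose hV]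
  have hgi : g i ≠ 0 := mul_ne_zero (hσ i).ne' (pow_ne_zero _ (hφ0 i))
  set c := Vᵀ *ᵥ (V.col i - s)
  have hu : U.col i = (g i)⁻¹ • (A * F ^ ℓ) *ᵥ V.col i := by
    rw [hAF, mul_diagonal_mul_transpose_mulVec_col hV, smul_smul, inv_mul_cancel₀ hgi, one_smul]
  have hw : PU *ᵥ ((g i)⁻¹ • (A * F ^ ℓ) *ᵥ s) = (g i)⁻¹ • (A * F ^ ℓ) *ᵥ s :=
    mulVec_eq_self_of_mem_span_range_transpose hPUidem (hPUrange ▸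
      Submodule.smul_mem _ _ (mulVec_mem_span_range_transpose_mul _ hsmem))
  have hratio : ∀ j, c j ≠ 0 → |((g i)⁻¹ • g) j| ≤ α * |φ ⟨p, hp⟩ / φ i| ^ ℓ := by
    intro j hcj
    have hpj : p ≤ (j : ℕ) := not_lt.mp fun hj => hcj <|
      transpose_mulVec_col_sub_apply_eq_zero hV (by simpa using hi) (by simpa using hj)
        (hP ▸ hsproj)
    exact abs_inv_mul_mul_pow_le (hσ i) (hσ j).le (hα.2 ⟨j, hpj, rfl⟩) (hφmono _ _ hpj) ℓ
  have hα0 : 0 ≤ α := let ⟨j, _, hj⟩ := hα.1; hj ▸ div_nonneg (hσ j).le (hσ i).le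
  have hVt : Vᵀᵀ * Vᵀ = 1 := by rw [transpose_transpose]; exact mul_eq_one_comm.mp hV
  show enorm₂ (U.col i - PU *ᵥ U.col i) ≤ _
  calc enorm₂ (U.col i - PU *ᵥ U.col i)
      ≤ enorm₂ (U.col i - (g i)⁻¹ • (A * F ^ ℓ) *ᵥ s) := enorm₂_sub_mulVec_le hPUsym hPUidem _ hw
    _ = enorm₂ ((g i)⁻¹ • g * c) := by
      rw [hu, ← smul_sub, ← mulVec_sub, hAF, mul_diagonal_mul_transpose_mulVec, ← mulVec_smul,
        smul_mul_assoc, enorm₂_mulVec hU]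
    _ ≤ α * |φ ⟨p, hp⟩ / φ i| ^ ℓ * enorm₂ c := enorm₂_mul_le (by positivity) hratio
    _ = α * β * |φ ⟨p, hp⟩ / φ i| ^ ℓ := by
      rw [enorm₂_mulVec hVt, hβ, mul_right_comm]
      rfl

/-- Error bound for the left singular vectors: with
`F = V diag(φ) Vᵀ`, `|φ₁| ≥ … ≥ |φₙ|`, `rank(PK) = p`, `sᵢ` the unique vector of
the column space of `K` with `P sᵢ = vᵢ`, `βᵢ = ‖vᵢ − sᵢ‖₂`,
`αᵢ = max_{j ≥ p+1} σⱼ/σᵢ`, and `𝒫_U` the orthogonal projection onto the column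
space of `A Fˡ K`, one has `‖(I − 𝒫_U) uᵢ‖₂ ≤ αᵢ βᵢ |φ_{p+1}/φᵢ|ˡ`. -/
theorem stmt_9 {m n : ℕ} (hmn : n ≤ m)
    (U : Matrix (Fin m) (Fin n) ℝ) (V : Matrix (Fin n) (Fin n) ℝ) (σ : Fin n → ℝ)
    (hU : Uᵀ * U = 1) (hV : Vᵀ * V = 1) (hσ : ∀ i, 0 < σ i)
    (A : Matrix (Fin m) (Fin n) ℝ) (hA : A = U * Matrix.diagonal σ * Vᵀ)
    (φ : Fin n → ℝ) (hφ0 : ∀ i, φ i ≠ 0)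
    (hφmono : ∀ i j : Fin n, i ≤ j → |φ j| ≤ |φ i|)
    (F : Matrix (Fin n) (Fin n) ℝ) (hF : F = V * Matrix.diagonal φ * Vᵀ)
    (ℓ : ℕ) (hℓ : 0 < ℓ)
    (p : ℕ) (hp : p < n)
    (K : Matrix (Fin n) (Fin p) ℝ)
    (P : Matrix (Fin n) (Fin n) ℝ)
    (hP : P = ∑ i ∈ Finset.univ.filter fun i : Fin n => (i : ℕ) < p,
      Matrix.vecMulVec (fun a => V a i) (fun a => V a i))
    (hrank : (P * K).rank = p)
    (i : Fin n) (hi : (i : ℕ) < p)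
    (s : Fin n → ℝ)
    (hsmem : s ∈ Submodule.span ℝ (Set.range Kᵀ))
    (hsproj : P.mulVec s = fun a => V a i)
    (β : ℝ) (hβ : β = enorm₂ (fun a => V a i - s a))
    (α : ℝ) (hα : IsGreatest {x : ℝ | ∃ j : Fin n, p ≤ (j : ℕ) ∧ x = σ j / σ i} α)
    (PU : Matrix (Fin m) (Fin m) ℝ)
    (hPUsym : PUᵀ = PU) (hPUidem : PU * PU = PU)
    (hPUrange : Submodule.span ℝ (Set.range PUᵀ) =
      Submodule.span ℝ (Set.range (A * F ^ ℓ * K)ᵀ)) :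
    enorm₂ (fun a => U a i - PU.mulVec (fun b => U b i) a) ≤
      α * β * |φ ⟨p, hp⟩ / φ i| ^ ℓ :=
  stmt_9_general U V σ hU hV hσ A hA φ hφ0 hφmono F hF ℓ p hp K P hP i hi s hsmem hsproj β hβ α hα
    PU hPUsym hPUidem hPUrange
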